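/- Suppose a pair (v, π), with v : S → ℝ and π a full-support policy on a finite state-action space, satisfies v(s) = r(s,a) + γ Σ_{s'} P(s'|s,a) v(s') − α log π(a|s) for ALL pairs (s,a). Then for every s, the vector (r(s,a) + γ Σ_{s'} P(s'|s,a) v(s'))_a equals (v(s) + α log π(a|s))_a, and consequently π(a|s) ∝ exp((r(s,a) + γ Σ_{s'} P(s'|s,a) v(s'))/α) with v(s) = α log Σ_a exp((r(s,a) + γ Σ_{s'} P(s'|s,a) v(s'))/α). -/
import Mathlib


theorem stmt_13 {S A : Type*} [Fintype S] [Fintype A] [Nonempty A]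
    (P : S → A → S → ℝ) (r : S → A → ℝ) (γ α : ℝ)
    (hγ0 : 0 ≤ γ) (hγ1 : γ < 1) (hα : 0 < α)
    (v : S → ℝ) (π : S → A → ℝ)
    (hπpos : ∀ s a, 0 < π s a) (hπsum : ∀ s, ∑ a, π s a = 1)
    (hcons : ∀ s a, v s = r s a + γ * ∑ s', P s a s' * v s'
      - α * Real.log (π s a)) :
    (∀ s a, r s a + γ * ∑ s', P s a s' * v s' = v s + α * Real.log (π s a)) ∧
      (∀ s a, π s a =
        Real.exp ((r s a + γ * ∑ s', P s a s' * v s') / α) /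
          ∑ b, Real.exp ((r s b + γ * ∑ s', P s b s' * v s') / α)) ∧
      (∀ s, v s =
        α * Real.log (∑ a, Real.exp ((r s a + γ * ∑ s', P s a s' * v s') / α))) := by
  have heq : ∀ s a, r s a + γ * ∑ s', P s a s' * v s' = v s + α * Real.log (π s a) := by
    intro s a; have := hcons s a; linarith
  have hexp : ∀ s a, Real.exp ((r s a + γ * ∑ s', P s a s' * v s') / α)
      = Real.exp (v s / α) * π s a := by
    intro s a
    rw [heq s a]
    have : (v s + α * Real.log (π s a)) / α = v s / α + Real.log (π s a) := by
      field_simp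
    rw [this, Real.exp_add, Real.exp_log (hπpos s a)]
  have hsum : ∀ s, (∑ b, Real.exp ((r s b + γ * ∑ s', P s b s' * v s') / α))
      = Real.exp (v s / α) := by
    intro s
    simp only [hexp, ← Finset.mul_sum, hπsum s, mul_one]
  refine ⟨heq, fun s a => ?_, fun s => ?_⟩
  · rw [hexp, hsum, mul_div_assoc, mul_comm]
    field_simp
  · rw [hsum, Real.log_exp]
    field_simp
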